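/- A topological space X is stably locally compact (locally compact, coherent and sober) if and only if X is a core-compact, weakly Hausdorff, weakly coherent, monotone convergence space. -/

import Mathlib

/-- The specialization preorder: `x ≤ y` iff every open neighborhood of `x` contains `y`. -/
def SpecLE {X : Type*} [TopologicalSpace X] (x y : X) : Prop :=
  ∀ U : Set X, IsOpen U → x ∈ U → y ∈ U

/-- `↑x`, the upward closure of the point `x` in the specialization preorder. -/
def UpSet {X : Type*} [TopologicalSpace X] (x : X) : Set X :=
  {z | SpecLE x z}

/-- `↑A`, the upward closure of the set `A` in the specialization preorder. -/
def UpClo {X : Type*} [TopologicalSpace X] (A : Set X) : Set X :=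
  {z | ∃ a ∈ A, SpecLE a z}

/-- `↓A`, the downward closure of the set `A` in the specialization preorder. -/
def DownClo {X : Type*} [TopologicalSpace X] (A : Set X) : Set X :=
  {z | ∃ a ∈ A, SpecLE z a}

/-- A space is weakly Hausdorff (Keimel-Lawson) iff every open neighborhood `W` of
`↑x ∩ ↑y` contains `U ∩ V` for some open neighborhoods `U` of `x` and `V` of `y`. -/
def WeaklyHausdorff (X : Type*) [TopologicalSpace X] : Prop :=
  ∀ x y : X, ∀ W : Set X, IsOpen W → UpSet x ∩ UpSet y ⊆ W →
    ∃ U V : Set X, IsOpen U ∧ x ∈ U ∧ IsOpen V ∧ y ∈ V ∧ U ∩ V ⊆ W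

/-- The set of limits of a filter: points all of whose open neighborhoods belong to it. -/
def limSet {X : Type*} [TopologicalSpace X] (F : Filter X) : Set X :=
  {x | ∀ U : Set X, IsOpen U → x ∈ U → U ∈ F}

/-- Locally strongly sober: limits of each ultrafilter form the empty set or the closure
of a unique point. -/
def LocallyStronglySober (X : Type*) [TopologicalSpace X] : Prop :=
  ∀ 𝒰 : Ultrafilter X, limSet (𝒰 : Filter X) = ∅ ∨ ∃! x : X, limSet (𝒰 : Filter X) = closure {x}

/-- Saturated subset: intersection of its open neighborhoods. -/
def IsSaturated {X : Type*} [TopologicalSpace X] (A : Set X) : Prop :=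
  A = ⋂₀ {U : Set X | IsOpen U ∧ A ⊆ U}

/-- Coherent space: intersections of compact saturated subsets are compact. -/
def Coherent (X : Type*) [TopologicalSpace X] : Prop :=
  ∀ Q₁ Q₂ : Set X, IsCompact Q₁ → IsSaturated Q₁ → IsCompact Q₂ → IsSaturated Q₂ →
    IsCompact (Q₁ ∩ Q₂)

/-- Weakly coherent space: `↑x ∩ ↑y` is compact for all points `x`, `y`. -/
def WeaklyCoherent (X : Type*) [TopologicalSpace X] : Prop :=
  ∀ x y : X, IsCompact (UpSet x ∩ UpSet y)

/-- Sober space: every irreducible closed subset is the closure of a unique point. -/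
def Sober (X : Type*) [TopologicalSpace X] : Prop :=
  ∀ C : Set X, IsClosed C → IsIrreducible C → ∃! x : X, C = closure {x}

/-- `z` is a supremum of `D` with respect to the specialization preorder. -/
def IsSupOf {X : Type*} [TopologicalSpace X] (D : Set X) (z : X) : Prop :=
  (∀ d ∈ D, SpecLE d z) ∧ ∀ y : X, (∀ d ∈ D, SpecLE d y) → SpecLE z y

/-- `D` is (nonempty and) directed with respect to the specialization preorder. -/
def DirectedSubset {X : Type*} [TopologicalSpace X] (D : Set X) : Prop :=
  D.Nonempty ∧ DirectedOn SpecLE D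

/-- Monotone convergence space: a T0 space where every directed subset has a supremum for the
specialization ordering, and every open set is Scott-open. -/
def MonotoneConvergenceSpace (X : Type*) [TopologicalSpace X] : Prop :=
  T0Space X ∧ (∀ D : Set X, DirectedSubset D → ∃ z : X, IsSupOf D z) ∧
    ∀ U : Set X, IsOpen U → ∀ D : Set X, ∀ z : X,
      DirectedSubset D → IsSupOf D z → z ∈ U → ∃ d ∈ D, d ∈ U

/-- A filter on a complete lattice: nonempty, upward closed, downward directed. -/
def IsLatFilter {L : Type*} [CompleteLattice L] (F : Set L) : Prop :=
  F.Nonempty ∧ (∀ u ∈ F, ∀ v : L, u ≤ v → v ∈ F) ∧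
    ∀ u ∈ F, ∀ v ∈ F, ∃ w ∈ F, w ≤ u ∧ w ≤ v

/-- A Scott-open filter on a complete lattice. -/
def ScottOpenFilter {L : Type*} [CompleteLattice L] (F : Set L) : Prop :=
  IsLatFilter F ∧
    ∀ D : Set L, D.Nonempty → DirectedOn (· ≤ ·) D → sSup D ∈ F → ∃ d ∈ D, d ∈ F

/-- The join of two filters on a complete lattice: `{u ⊓ v | u ∈ F, v ∈ G}`. -/
def FilterJoin {L : Type*} [CompleteLattice L] (F G : Set L) : Set L :=
  {w | ∃ u ∈ F, ∃ v ∈ G, w = u ⊓ v}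

/-- Locally temperate: the join of any two Scott-open filters is a Scott-open filter. -/
def LocallyTemperate (L : Type*) [CompleteLattice L] : Prop :=
  ∀ F G : Set L, ScottOpenFilter F → ScottOpenFilter G → ScottOpenFilter (FilterJoin F G)

/-- `u` is way below `v`: every directed set with supremum above `v` contains an element above `u`. -/
def WayBelowL {L : Type*} [CompleteLattice L] (u v : L) : Prop :=
  ∀ D : Set L, D.Nonempty → DirectedOn (· ≤ ·) D → v ≤ sSup D → ∃ d ∈ D, u ≤ d

/-- Continuous lattice: every element is the supremum of a directed family of elements
way below it. -/
def ContinuousLat (L : Type*) [CompleteLattice L] : Prop :=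
  ∀ v : L, ∃ D : Set L, D.Nonempty ∧ DirectedOn (· ≤ ·) D ∧ (∀ d ∈ D, WayBelowL d v) ∧ v = sSup D

/-- Stable frame: `u ≪ v` and `u ≪ w` imply `u ≪ v ⊓ w`. -/
def StableLat (L : Type*) [CompleteLattice L] : Prop :=
  ∀ u v w : L, WayBelowL u v → WayBelowL u w → WayBelowL u (v ⊓ w)

/-- Core-compact space: the frame of open subsets is a continuous lattice. -/
def CoreCompact (X : Type*) [TopologicalSpace X] : Prop :=
  ContinuousLat (TopologicalSpace.Opens X)

/-- A lens: a nonempty set of the form `Q ∩ C` with `Q` compact saturated and `C` closed. -/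
def IsLens {X : Type*} [TopologicalSpace X] (L : Set X) : Prop :=
  L.Nonempty ∧ ∃ Q C : Set X, IsCompact Q ∧ IsSaturated Q ∧ IsClosed C ∧ L = Q ∩ C

/-- A quasi-lens: a pair `(Q, C)`, `Q` compact saturated, `C` closed, `Q` meets `C`,
`Q ⊆ ↑(Q ∩ C)`, and `C ⊆ cl (U ∩ C)` for every open neighborhood `U` of `Q`. -/
def IsQuasiLens {X : Type*} [TopologicalSpace X] (Q C : Set X) : Prop :=
  IsCompact Q ∧ IsSaturated Q ∧ IsClosed C ∧ (Q ∩ C).Nonempty ∧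
    Q ⊆ UpClo (Q ∩ C) ∧ ∀ U : Set X, IsOpen U → Q ⊆ U → C ⊆ closure (U ∩ C)

/-!
A locally compact space is core-compact, since interiors of compact neighbourhoods are way
below the open sets containing them. In a sober space the Hofmann–Mislove theorem says that a
Scott-open filter of opens consists of all opens containing its intersection, which is then
compact. Sobriety gives the monotone convergence property, the supremum of a directed set being
the generic point of its closure. For weak Hausdorffness, `↑x ∩ ↑y` is the intersection of the
filtered family of compact (by coherence) sets `K ∩ L`, with `K`, `L` compact saturated
neighbourhoods of `x`, `y`; by Hofmann–Mislove an open `W ⊇ ↑x ∩ ↑y` contains one of them,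
hence `int K ∩ int L`.

Conversely, weak Hausdorffness makes an irreducible closed set directed, and its supremum is a
generic point. In a continuous lattice of opens, interpolation gives a chain
`U ≪ ⋯ ≪ W₂ ≪ W₁ ≪ V`, the `Wₙ` generate a Scott-open filter, and by Hofmann–Mislove
`⋂ Wₙ` is a compact neighbourhood of the points of `U` inside `V`. Finally, given compact
saturated `Q₁`, `Q₂`, a cover of `Q₁ ∩ Q₂` has a finite subcover of each `↑x ∩ ↑y`, and weak
Hausdorffness with two tube-lemma arguments over `Q₁` and `Q₂` makes it a finite subcover of
`Q₁ ∩ Q₂`.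
-/

open TopologicalSpace Set Filter Topology

section Specialization
variable {X : Type*} [TopologicalSpace X] {x y : X}

lemma specLE_iff_mem_closure : SpecLE x y ↔ x ∈ closure ({y} : Set X) := by
  rw [← specializes_iff_mem_closure, specializes_iff_forall_open]
  rfl

lemma DirectedSubset.isIrreducible {D : Set X} (hD : DirectedSubset D) : IsIrreducible D :=
  ⟨hD.1, fun A B hA hB ⟨a, haD, haA⟩ ⟨b, hbD, hbB⟩ =>
    let ⟨c, hcD, hac, hbc⟩ := hD.2 a haD b hbD
    ⟨c, hcD, hac A hA haA, hbc B hB hbB⟩⟩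

lemma isSupOf_of_closure_eq {D : Set X} {z : X} (h : closure D = closure {z}) :
    IsSupOf D z := by
  refine ⟨fun d hd => specLE_iff_mem_closure.2 (h ▸ subset_closure hd), fun y hy => ?_⟩
  have hzy : closure {z} ⊆ closure {y} :=
    h ▸ closure_minimal (fun d hd => specLE_iff_mem_closure.1 (hy d hd)) isClosed_closure
  exact specLE_iff_mem_closure.2 (hzy (subset_closure rfl))

end Specialization

section Saturation
variable {X : Type*} [TopologicalSpace X] {A B : Set X}

def saturation (A : Set X) : Set X := ⋂₀ {U : Set X | IsOpen U ∧ A ⊆ U}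

lemma subset_saturation (A : Set X) : A ⊆ saturation A := fun _ hz _ hU => hU.2 hz

lemma saturation_subset {U : Set X} (hU : IsOpen U) (h : A ⊆ U) : saturation A ⊆ U :=
  fun _ hz => hz U ⟨hU, h⟩

lemma saturation_mono (h : A ⊆ B) : saturation A ⊆ saturation B :=
  fun _ hz U hU => hz U ⟨hU.1, h.trans hU.2⟩

lemma isSaturated_iff_saturation_subset : IsSaturated A ↔ saturation A ⊆ A :=
  ⟨fun h => h.symm.subset, fun h => (subset_saturation A).antisymm h⟩

lemma isSaturated_saturation (A : Set X) : IsSaturated (saturation A) :=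
  isSaturated_iff_saturation_subset.2 fun _ hz U hU => hz U ⟨hU.1, saturation_subset hU.1 hU.2⟩

lemma IsSaturated.inter (hA : IsSaturated A) (hB : IsSaturated B) : IsSaturated (A ∩ B) :=
  isSaturated_iff_saturation_subset.2 fun _ hz =>
    ⟨isSaturated_iff_saturation_subset.1 hA (saturation_mono inter_subset_left hz),
      isSaturated_iff_saturation_subset.1 hB (saturation_mono inter_subset_right hz)⟩

lemma IsCompact.saturation (hA : IsCompact A) : IsCompact (saturation A) :=
  isCompact_of_finite_subcover fun U hU hcov =>
    let ⟨t, ht⟩ := hA.elim_finite_subcover U hU ((subset_saturation A).trans hcov)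
    ⟨t, saturation_subset (isOpen_biUnion fun i _ => hU i) ht⟩

lemma saturation_singleton (x : X) : saturation {x} = UpSet x := by
  ext z
  simp [saturation, UpSet, SpecLE]

lemma IsSaturated.upSet_subset (hA : IsSaturated A) {x : X} (hx : x ∈ A) : UpSet x ⊆ A :=
  saturation_singleton x ▸
    (saturation_mono (singleton_subset_iff.2 hx)).trans (isSaturated_iff_saturation_subset.1 hA)

lemma exists_isCompact_isSaturated_nhds [LocallyCompactSpace X] {x : X} {O : Set X}
    (hO : IsOpen O) (hx : x ∈ O) : ∃ K, IsCompact K ∧ IsSaturated K ∧ K ∈ 𝓝 x ∧ K ⊆ O := by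
  obtain ⟨K, hKx, hKO, hK⟩ := local_compact_nhds (hO.mem_nhds hx)
  exact ⟨saturation K, hK.saturation, isSaturated_saturation K,
    mem_of_superset hKx (subset_saturation K), saturation_subset hO hKO⟩

end Saturation

section ContinuousLattice
variable {L : Type*} [CompleteLattice L] {u u' v v' : L}

lemma WayBelowL.le (h : WayBelowL u v) : u ≤ v := by
  obtain ⟨d, hd, hud⟩ := h {v} (singleton_nonempty v) (directedOn_singleton v) sSup_singleton.ge
  exact hud.trans (mem_singleton_iff.1 hd).le

lemma WayBelowL.mono (h : WayBelowL u v) (hu : u' ≤ u) (hv : v ≤ v') : WayBelowL u' v' :=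
  fun D hD hdir hle => (h D hD hdir (hv.trans hle)).imp fun _ ⟨hd, hud⟩ => ⟨hd, hu.trans hud⟩

lemma wayBelowL_bot (v : L) : WayBelowL ⊥ v := fun _ ⟨d, hd⟩ _ _ => ⟨d, hd, bot_le⟩

lemma WayBelowL.sup (h : WayBelowL u v) (h' : WayBelowL u' v) : WayBelowL (u ⊔ u') v := by
  intro D hD hdir hle
  obtain ⟨d, hd, hud⟩ := h D hD hdir hle
  obtain ⟨d', hd', hud'⟩ := h' D hD hdir hle
  obtain ⟨e, he, hde, hd'e⟩ := hdir d hd d' hd'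
  exact ⟨e, he, sup_le (hud.trans hde) (hud'.trans hd'e)⟩

lemma directedOn_wayBelowL (v : L) : DirectedOn (· ≤ ·) {u | WayBelowL u v} :=
  fun a ha b hb => ⟨a ⊔ b, ha.sup hb, le_sup_left, le_sup_right⟩

lemma continuousLat_iff : ContinuousLat L ↔ ∀ v : L, v ≤ sSup {u | WayBelowL u v} := by
  refine ⟨fun h v => ?_, fun h v => ⟨_, ⟨⊥, wayBelowL_bot v⟩, directedOn_wayBelowL v,
    fun _ hu => hu, (h v).antisymm (sSup_le fun _ hu => hu.le)⟩⟩
  obtain ⟨D, -, -, hD, rfl⟩ := h v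
  exact sSup_le_sSup hD

lemma ContinuousLat.exists_wayBelowL_wayBelowL (hL : ContinuousLat L) (h : WayBelowL u v) :
    ∃ w, WayBelowL u w ∧ WayBelowL w v := by
  rw [continuousLat_iff] at hL
  let D := {e | ∃ d, WayBelowL e d ∧ WayBelowL d v}
  have hdir : DirectedOn (· ≤ ·) D := by
    rintro a ⟨d, had, hdv⟩ b ⟨d', hbd', hd'v⟩
    exact ⟨a ⊔ b, ⟨d ⊔ d', (had.mono le_rfl le_sup_left).sup (hbd'.mono le_rfl le_sup_right),
      hdv.sup hd'v⟩, le_sup_left, le_sup_right⟩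
  have hvD : v ≤ sSup D :=
    (hL v).trans <| sSup_le fun d hdv => (hL d).trans <| sSup_le_sSup fun e hed => ⟨d, hed, hdv⟩
  obtain ⟨e, ⟨d, hed, hdv⟩, hue⟩ := h D ⟨⊥, ⊥, wayBelowL_bot _, wayBelowL_bot _⟩ hdir hvD
  exact ⟨d, hed.mono hue le_rfl, hdv⟩

lemma scottOpenFilter_of_wayBelowL_succ {w : ℕ → L} (hw : ∀ n, WayBelowL (w (n + 1)) (w n)) :
    ScottOpenFilter {y | ∃ n, w n ≤ y} := by
  have hanti : Antitone w := antitone_nat_of_succ_le fun n => (hw n).le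
  refine ⟨⟨⟨w 0, 0, le_rfl⟩, fun y ⟨n, hn⟩ z hyz => ⟨n, hn.trans hyz⟩, ?_⟩, ?_⟩
  · rintro y ⟨m, hm⟩ z ⟨n, hn⟩
    exact ⟨w (max m n), ⟨_, le_rfl⟩, (hanti (le_max_left m n)).trans hm,
      (hanti (le_max_right m n)).trans hn⟩
  · rintro D hD hdir ⟨n, hn⟩
    obtain ⟨d, hd, hwd⟩ := hw n D hD hdir hn
    exact ⟨d, hd, n + 1, hwd⟩

lemma ContinuousLat.exists_scottOpenFilter (hL : ContinuousLat L) (h : WayBelowL u v) :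
    ∃ F : Set L, ScottOpenFilter F ∧ v ∈ F ∧ ∀ y ∈ F, u ≤ y := by
  choose next hnext using fun w : {w : L // WayBelowL u w} => hL.exists_wayBelowL_wayBelowL w.2
  let seq (n : ℕ) : {w : L // WayBelowL u w} := (fun w => ⟨next w, (hnext w).1⟩)^[n] ⟨v, h⟩
  refine ⟨_, scottOpenFilter_of_wayBelowL_succ (w := fun n => (seq n).1) fun n => ?_,
    ⟨0, le_rfl⟩, fun y ⟨n, hn⟩ => (seq n).2.le.trans hn⟩
  simp only [seq, Function.iterate_succ_apply']
  exact (hnext _).2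

end ContinuousLattice

section ScottOpenFilters
variable {L : Type*} [CompleteLattice L] {F : Set L} {u v : L}

lemma IsLatFilter.top_mem (hF : IsLatFilter F) : ⊤ ∈ F :=
  let ⟨u, hu⟩ := hF.1
  hF.2.1 u hu ⊤ le_top

lemma IsLatFilter.inf_mem (hF : IsLatFilter F) (hu : u ∈ F) (hv : v ∈ F) : u ⊓ v ∈ F :=
  let ⟨w, hw, hwu, hwv⟩ := hF.2.2 u hu v hv
  hF.2.1 w hw _ (le_inf hwu hwv)

variable {X : Type*} [TopologicalSpace X]

lemma isCompact_iff_scottOpenFilter {K : Set X} :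
    IsCompact K ↔ ScottOpenFilter {U : Opens X | K ⊆ U} := by
  refine ⟨fun hK => ⟨⟨⟨⊤, subset_univ K⟩, fun U (hU : K ⊆ U) V hUV => (hU.trans hUV : K ⊆ V),
    fun U hU V hV => ⟨U ⊓ V, subset_inter hU hV, inf_le_left, inf_le_right⟩⟩, ?_⟩, fun hF => ?_⟩
  · intro D hD hdir (hKD : K ⊆ ↑(sSup D))
    have : Nonempty D := hD.to_subtype
    rw [Opens.coe_sSup, biUnion_eq_iUnion] at hKD
    obtain ⟨⟨d, hd⟩, hKd⟩ :=
      hK.elim_directed_cover (fun d : D => (d : Set X)) (fun d => d.1.2) hKD hdir.directed_val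
    exact ⟨d, hd, hKd⟩
  · refine isCompact_of_finite_subcover fun U hU hcov => ?_
    classical
    let f (t : Finset _) : Opens X := ⟨⋃ i ∈ t, U i, isOpen_biUnion fun i _ => hU i⟩
    have hf : Monotone f := fun _ _ h => biUnion_subset_biUnion_left h
    have hKf : K ⊆ ↑(sSup (range f)) := fun x hx => by
      obtain ⟨i, hi⟩ := mem_iUnion.1 (hcov hx)
      exact (le_sSup (mem_range_self {i}) : f {i} ≤ _) (by simpa [f] using hi : x ∈ f {i})
    obtain ⟨_, ⟨t, rfl⟩, ht⟩ :=
      hF.2 (range f) (range_nonempty f) (directedOn_range.2 hf.directed_le) hKf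
    exact ⟨t, ht⟩

lemma IsCompact.wayBelowL_opens {K : Set X} (hK : IsCompact K) {U V : Opens X}
    (hUK : (U : Set X) ⊆ K) (hKV : K ⊆ V) : WayBelowL U V := fun D hD hdir hVD =>
  let ⟨d, hd, hKd⟩ := (isCompact_iff_scottOpenFilter.1 hK).2 D hD hdir (hKV.trans hVD)
  ⟨d, hd, hUK.trans hKd⟩

lemma scottOpenFilter_of_directedOn_isCompact {𝒦 : Set (Set X)} (hne : 𝒦.Nonempty)
    (hdir : DirectedOn (· ⊇ ·) 𝒦) (hcpt : ∀ K ∈ 𝒦, IsCompact K) :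
    ScottOpenFilter {U : Opens X | ∃ K ∈ 𝒦, K ⊆ U} := by
  obtain ⟨K₀, hK₀⟩ := hne
  refine ⟨⟨⟨⊤, K₀, hK₀, subset_univ K₀⟩, fun U ⟨K, hK, hKU⟩ V hUV => ⟨K, hK, hKU.trans hUV⟩, ?_⟩,
    fun D hD hdir hKD => ?_⟩
  · rintro U ⟨K, hK, hKU⟩ V ⟨K', hK', hK'V⟩
    obtain ⟨K'', hK'', hK''K, hK''K'⟩ := hdir K hK K' hK'
    exact ⟨U ⊓ V, ⟨K'', hK'', subset_inter (hK''K.trans hKU) (hK''K'.trans hK'V)⟩,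
      inf_le_left, inf_le_right⟩
  · obtain ⟨K, hK, hKD⟩ := hKD
    obtain ⟨d, hd, hKd⟩ := (isCompact_iff_scottOpenFilter.1 (hcpt K hK)).2 D hD hdir hKD
    exact ⟨d, hd, K, hK, hKd⟩

end ScottOpenFilters

section HofmannMislove
variable {X : Type*} [TopologicalSpace X] {F : Set (Opens X)}

lemma isIrreducible_compl_of_sup_mem (hF : IsLatFilter F) {m : Opens X} (hm : m ∉ F)
    (hmax : ∀ W : Opens X, ¬ W ≤ m → W ⊔ m ∈ F) : IsIrreducible (m : Set X)ᶜ := by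
  refine ⟨nonempty_compl.2 fun h => hm (Opens.coe_eq_univ.1 h ▸ hF.top_mem), ?_⟩
  rintro A B hA hB ⟨a, ham, haA⟩ ⟨b, hbm, hbB⟩
  by_contra hAB
  refine hm (hF.2.1 _ (hF.inf_mem (hmax ⟨A, hA⟩ fun h => ham (h haA))
    (hmax ⟨B, hB⟩ fun h => hbm (h hbB))) m ?_)
  rintro z ⟨hzA | hzm, hzB | hzm'⟩
  exacts [by_contra fun hzm => hAB ⟨z, hzm, hzA, hzB⟩, hzm', hzm, hzm]

-- The Hofmann–Mislove theorem.
theorem Sober.mem_of_iInter_subset (hX : Sober X) (hF : ScottOpenFilter F) {U : Opens X}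
    (hU : ⋂ V ∈ F, (V : Set X) ⊆ U) : U ∈ F := by
  by_contra hUF
  obtain ⟨m, hUm, hmF, hmax⟩ := zorn_le_nonempty₀ {V | V ∉ F} (fun c hcF hc y hy =>
    ⟨sSup c, fun hcF' => let ⟨d, hd, hdF⟩ := hF.2 c ⟨y, hy⟩ hc.directedOn hcF'; hcF hd hdF,
      fun _ => le_sSup⟩) U hUF
  have hsup : ∀ W : Opens X, ¬ W ≤ m → W ⊔ m ∈ F := fun W hWm =>
    by_contra fun hWF => hWm (le_sup_left.trans (hmax hWF le_sup_right))
  obtain ⟨x, hx, -⟩ := hX _ m.2.isClosed_compl (isIrreducible_compl_of_sup_mem hF.1 hmF hsup)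
  -- the generic point of `mᶜ` lies in every member of `F`, hence in `U ⊆ m`
  have hxF : x ∈ ⋂ V ∈ F, (V : Set X) := mem_iInter₂.2 fun V hV => by_contra fun hxV =>
    hmF <| hF.1.2.1 V hV m fun z hzV => by_contra fun hzm =>
      hxV (specLE_iff_mem_closure.2 (by rw [← hx]; exact hzm) V V.2 hzV)
  exact (hx ▸ subset_closure rfl : x ∈ (m : Set X)ᶜ) (hUm (hU hxF))

theorem Sober.isCompact_iInter (hX : Sober X) (hF : ScottOpenFilter F) :
    IsCompact (⋂ V ∈ F, (V : Set X)) := by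
  rw [isCompact_iff_scottOpenFilter]
  convert hF using 1
  ext U
  exact ⟨hX.mem_of_iInter_subset hF, fun hU => biInter_subset_of_mem hU⟩

end HofmannMislove

section Forward
variable {X : Type*} [TopologicalSpace X]

theorem coreCompact_of_locallyCompactSpace [LocallyCompactSpace X] : CoreCompact X := by
  refine continuousLat_iff.2 fun V x hx => ?_
  obtain ⟨K, hKx, hKV, hK⟩ := local_compact_nhds (V.2.mem_nhds hx)
  rw [← SetLike.mem_coe, Opens.coe_sSup]
  exact mem_biUnion (x := ⟨interior K, isOpen_interior⟩)
    (hK.wayBelowL_opens interior_subset hKV) (mem_interior_iff_mem_nhds.2 hKx)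

theorem Sober.t0Space (hX : Sober X) : T0Space X :=
  (t0Space_iff_inseparable X).2 fun x y hxy => by
    obtain ⟨z, -, hz⟩ := hX _ isClosed_closure (isIrreducible_singleton (x := x)).closure
    exact (hz x rfl).trans (hz y (inseparable_iff_closure_eq.1 hxy)).symm

theorem Sober.monotoneConvergenceSpace (hX : Sober X) : MonotoneConvergenceSpace X := by
  have hsup (D : Set X) (hD : DirectedSubset D) : ∃ z, closure D = closure {z} :=
    (hX _ isClosed_closure hD.isIrreducible.closure).exists
  refine ⟨hX.t0Space, fun D hD => (hsup D hD).imp fun _ => isSupOf_of_closure_eq, ?_⟩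
  intro U hU D z hD hz hzU
  obtain ⟨z₀, hz₀⟩ := hsup D hD
  have hz₀U : z₀ ∈ U := hz.2 z₀ (isSupOf_of_closure_eq hz₀).1 U hU hzU
  obtain ⟨d, hdU, hdD⟩ := mem_closure_iff.1 (hz₀ ▸ subset_closure rfl : z₀ ∈ closure D) U hU hz₀U
  exact ⟨d, hdD, hdU⟩

theorem Coherent.weaklyCoherent (h : Coherent X) : WeaklyCoherent X := fun x y => by
  simp only [← saturation_singleton]
  exact h _ _ isCompact_singleton.saturation (isSaturated_saturation _)
    isCompact_singleton.saturation (isSaturated_saturation _)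

theorem weaklyHausdorff_of_coherent_of_sober [LocallyCompactSpace X] (hcoh : Coherent X)
    (hX : Sober X) : WeaklyHausdorff X := by
  intro x y W hW hxyW
  let N (p : X) : Set (Set X) := {K | IsCompact K ∧ IsSaturated K ∧ K ∈ 𝓝 p}
  have hN (p : X) {O : Set X} (hO : IsOpen O) (hp : p ∈ O) : ∃ K ∈ N p, K ⊆ O :=
    let ⟨K, hK, hKs, hKp, hKO⟩ := exists_isCompact_isSaturated_nhds hO hp
    ⟨K, ⟨hK, hKs, hKp⟩, hKO⟩
  have hN_inter (p : X) {K L : Set X} (hK : K ∈ N p) (hL : L ∈ N p) : K ∩ L ∈ N p :=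
    ⟨hcoh K L hK.1 hK.2.1 hL.1 hL.2.1, hK.2.1.inter hL.2.1, inter_mem hK.2.2 hL.2.2⟩
  obtain ⟨K₀, hK₀, -⟩ := hN x isOpen_univ (mem_univ x)
  obtain ⟨L₀, hL₀, -⟩ := hN y isOpen_univ (mem_univ y)
  let 𝒦 := image2 (· ∩ ·) (N x) (N y)
  have hF : ScottOpenFilter {U : Opens X | ∃ K ∈ 𝒦, K ⊆ U} := by
    refine scottOpenFilter_of_directedOn_isCompact ⟨_, mem_image2_of_mem hK₀ hL₀⟩ ?_ ?_
    · rintro _ ⟨K, hK, L, hL, rfl⟩ _ ⟨K', hK', L', hL', rfl⟩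
      exact ⟨_, mem_image2_of_mem (hN_inter x hK hK') (hN_inter y hL hL'),
        inter_subset_inter inter_subset_left inter_subset_left,
        inter_subset_inter inter_subset_right inter_subset_right⟩
    · rintro _ ⟨K, hK, L, hL, rfl⟩
      exact hcoh K L hK.1 hK.2.1 hL.1 hL.2.1
  have hFW : ⋂ V ∈ {U : Opens X | ∃ K ∈ 𝒦, K ⊆ U}, (V : Set X) ⊆ W := by
    refine fun z hz => hxyW ⟨fun O hO hxO => ?_, fun O hO hyO => ?_⟩
    · obtain ⟨K, hK, hKO⟩ := hN x hO hxO
      exact mem_iInter₂.1 hz ⟨O, hO⟩ ⟨_, mem_image2_of_mem hK hL₀, inter_subset_left.trans hKO⟩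
    · obtain ⟨L, hL, hLO⟩ := hN y hO hyO
      exact mem_iInter₂.1 hz ⟨O, hO⟩ ⟨_, mem_image2_of_mem hK₀ hL, inter_subset_right.trans hLO⟩
  obtain ⟨_, ⟨K, hK, L, hL, rfl⟩, hKLW⟩ := hX.mem_of_iInter_subset hF (U := ⟨W, hW⟩) hFW
  exact ⟨interior K, interior L, isOpen_interior, mem_interior_iff_mem_nhds.2 hK.2.2,
    isOpen_interior, mem_interior_iff_mem_nhds.2 hL.2.2,
    (inter_subset_inter interior_subset interior_subset).trans hKLW⟩

end Forward

section Backward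
variable {X : Type*} [TopologicalSpace X]

lemma WeaklyHausdorff.directedSubset_of_isIrreducible (hX : WeaklyHausdorff X) {C : Set X}
    (hC : IsClosed C) (hirr : IsIrreducible C) : DirectedSubset C := by
  refine ⟨hirr.nonempty, fun a ha b hb => ?_⟩
  by_contra! hab
  obtain ⟨U, V, hU, haU, hV, hbV, hUV⟩ :=
    hX a b Cᶜ hC.isOpen_compl fun z ⟨hza, hzb⟩ hzC => hab z hzC hza hzb
  obtain ⟨c, hcC, hcUV⟩ := hirr.2 U V hU hV ⟨a, ha, haU⟩ ⟨b, hb, hbV⟩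
  exact hUV hcUV hcC

theorem sober_of_weaklyHausdorff_of_monotoneConvergenceSpace (hwh : WeaklyHausdorff X)
    (hmc : MonotoneConvergenceSpace X) : Sober X := by
  obtain ⟨_, hsup, hscott⟩ := hmc
  intro C hC hirr
  have hdir := hwh.directedSubset_of_isIrreducible hC hirr
  obtain ⟨z, hz⟩ := hsup C hdir
  have hzC : z ∈ C := by_contra fun hzC =>
    let ⟨_, hd, hdC⟩ := hscott _ hC.isOpen_compl C z hdir hz hzC
    hdC hd
  have hCz : C = closure {z} := (closure_minimal (singleton_subset_iff.2 hzC) hC).antisymm'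
    fun d hd => specLE_iff_mem_closure.1 (hz.1 d hd)
  exact ⟨z, hCz, fun w hw => (inseparable_iff_closure_eq.2 (hw.symm.trans hCz)).eq⟩

theorem locallyCompactSpace_of_coreCompact_of_sober (hcc : CoreCompact X) (hX : Sober X) :
    LocallyCompactSpace X := by
  refine ⟨fun x n hn => ?_⟩
  obtain ⟨O, hOn, hO, hxO⟩ := mem_nhds_iff.1 hn
  have hx := continuousLat_iff.1 hcc ⟨O, hO⟩ hxO
  rw [← SetLike.mem_coe, Opens.coe_sSup, mem_iUnion₂] at hx
  obtain ⟨U, hUO, hxU⟩ := hx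
  obtain ⟨F, hF, hOF, hUF⟩ := hcc.exists_scottOpenFilter hUO
  exact ⟨⋂ V ∈ F, (V : Set X), mem_of_superset (U.2.mem_nhds hxU) (subset_iInter₂ hUF),
    (biInter_subset_of_mem hOF).trans hOn, hX.isCompact_iInter hF⟩

lemma IsCompact.exists_inter_subset_of_directed {ι : Type*} [Nonempty ι] {c : ι → Set X}
    (hc : Directed (· ⊆ ·) c) {Q : Set X} (hQ : IsCompact Q) {l : Filter X}
    (h : ∀ x ∈ Q, ∃ U ∈ 𝓝 x, ∃ V ∈ l, ∃ i, U ∩ V ⊆ c i) : ∃ V ∈ l, ∃ i, Q ∩ V ⊆ c i := by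
  refine hQ.induction_on (p := fun S => ∃ V ∈ l, ∃ i, S ∩ V ⊆ c i)
    ⟨univ, univ_mem, Classical.arbitrary ι, by simp⟩ ?_ ?_ fun x hx => ?_
  · rintro S T hST ⟨V, hV, i, hi⟩
    exact ⟨V, hV, i, (inter_subset_inter_left V hST).trans hi⟩
  · rintro S T ⟨V, hV, i, hi⟩ ⟨V', hV', j, hj⟩
    obtain ⟨k, hik, hjk⟩ := hc i j
    refine ⟨V ∩ V', inter_mem hV hV', k, ?_⟩
    rintro z ⟨hz | hz, hzV, hzV'⟩
    exacts [hik (hi ⟨hz, hzV⟩), hjk (hj ⟨hz, hzV'⟩)]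
  · obtain ⟨U, hU, V, hV, i, hi⟩ := h x hx
    exact ⟨U, mem_nhdsWithin_of_mem_nhds hU, V, hV, i, hi⟩

theorem coherent_of_weaklyHausdorff_of_weaklyCoherent (hwh : WeaklyHausdorff X)
    (hwc : WeaklyCoherent X) : Coherent X := by
  intro Q₁ Q₂ hQ₁ hQ₁s hQ₂ hQ₂s
  refine isCompact_of_finite_subcover fun S hS hcov => ?_
  classical
  let c (t : Finset _) : Set X := ⋃ i ∈ t, S i
  have hc : Directed (· ⊆ ·) c :=
    directed_of_isDirected_le fun _ _ h => biUnion_subset_biUnion_left h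
  have hpair : ∀ x ∈ Q₁, ∀ y ∈ Q₂, ∃ U ∈ 𝓝 x, ∃ V ∈ 𝓝 y, ∃ t, U ∩ V ⊆ c t := by
    intro x hx y hy
    obtain ⟨t, ht⟩ := (hwc x y).elim_finite_subcover S hS
      ((inter_subset_inter (hQ₁s.upSet_subset hx) (hQ₂s.upSet_subset hy)).trans hcov)
    obtain ⟨U, V, hU, hxU, hV, hyV, hUV⟩ := hwh x y _ (isOpen_biUnion fun i _ => hS i) ht
    exact ⟨U, hU.mem_nhds hxU, V, hV.mem_nhds hyV, t, hUV⟩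
  have hslice : ∀ y ∈ Q₂, ∃ V ∈ 𝓝 y, ∃ U ∈ 𝓟 Q₁, ∃ t, V ∩ U ⊆ c t := fun y hy => by
    obtain ⟨V, hV, t, ht⟩ := hQ₁.exists_inter_subset_of_directed hc fun x hx => hpair x hx y hy
    exact ⟨V, hV, Q₁, mem_principal_self Q₁, t, inter_comm V Q₁ ▸ ht⟩
  obtain ⟨U, hU, t, ht⟩ := hQ₂.exists_inter_subset_of_directed hc hslice
  exact ⟨t, inter_comm Q₁ Q₂ ▸ (inter_subset_inter_right Q₂ hU).trans ht⟩

end Backward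

theorem stablyLocallyCompact_iff (X : Type*) [TopologicalSpace X] :
    (LocallyCompactSpace X ∧ Coherent X ∧ Sober X) ↔
      (CoreCompact X ∧ WeaklyHausdorff X ∧ WeaklyCoherent X ∧ MonotoneConvergenceSpace X) := by
  constructor
  · rintro ⟨hlc, hcoh, hX⟩
    exact ⟨coreCompact_of_locallyCompactSpace, weaklyHausdorff_of_coherent_of_sober hcoh hX,
      hcoh.weaklyCoherent, hX.monotoneConvergenceSpace⟩
  · rintro ⟨hcc, hwh, hwc, hmc⟩
    have hX := sober_of_weaklyHausdorff_of_monotoneConvergenceSpace hwh hmc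
    exact ⟨locallyCompactSpace_of_coreCompact_of_sober hcc hX,
      coherent_of_weaklyHausdorff_of_weaklyCoherent hwh hwc, hX⟩
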